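/- Consider the graph on vertices {1,…,8} where {1,2,3,4} are ports, port 1 is adjacent to ancillas 5 and 8, port 2 to ancillas 5 and 6, port 3 to ancillas 6 and 7, port 4 to ancillas 7 and 8 (the 'cross' pattern). There is no assignment of strictly positive weights Δ₁,…,Δ₈ making the maximum-weight independent sets realize the even-parity language on ports {0000,1100,0011,1001,0110,0101,1010,1111}: degeneracy of 1111 versus gapping of 1110 forces Δ₈ < Δ₄, while degeneracy of 1100 versus gapping of 1101 forces Δ₈ > Δ₄, a contradiction. -/
import Mathlib


open Finset
open scoped Classical

section Framework

variable {V : Type*} {ι : Type*}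

/-- An independent set of a simple graph, given as a `Finset` of vertices. -/
def IsIndepSet' (G : SimpleGraph V) (S : Finset V) : Prop :=
  ∀ i ∈ S, ∀ j ∈ S, ¬ G.Adj i j

/-- Total weight of a finite set of vertices. -/
noncomputable def wt (Δ : V → ℝ) (S : Finset V) : ℝ := ∑ v ∈ S, Δ v

/-- `S` is a maximum-weight independent set of `G` with weights `Δ`. -/
def IsMWIS (G : SimpleGraph V) (Δ : V → ℝ) (S : Finset V) : Prop :=
  IsIndepSet' G S ∧ ∀ T : Finset V, IsIndepSet' G T → wt Δ T ≤ wt Δ S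

/-- Indicator vector recording which ports are contained in `S`. -/
noncomputable def portInd (ports : ι → V) (S : Finset V) : ι → Bool :=
  fun i => if ports i ∈ S then true else false

/-- The weighted graph `G` with designated `ports` realizes the language `L`:
the map from maximum-weight independent sets to port indicator vectors is a
bijection onto `L`. -/
def Realizes (G : SimpleGraph V) (Δ : V → ℝ) (ports : ι → V)
    (L : Set (ι → Bool)) : Prop :=
  (∀ S, IsMWIS G Δ S → portInd ports S ∈ L) ∧
  (∀ x ∈ L, ∃ S, IsMWIS G Δ S ∧ portInd ports S = x) ∧
  (∀ S T, IsMWIS G Δ S → IsMWIS G Δ T →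
    portInd ports S = portInd ports T → S = T)

/-- A maximal independent set: no vertex can be added while staying independent. -/
def IsMaxlIndep (G : SimpleGraph V) (S : Finset V) : Prop :=
  IsIndepSet' G S ∧ ∀ v ∉ S, ¬ IsIndepSet' G (insert v S)

end Framework

/-- The 'cross' graph on `Fin 8`: ports `0,1,2,3`, ancillas `4,5,6,7`; port `0`
(port 1 of the paper) is adjacent to ancillas `4` and `7` (ancillas 5 and 8),
port `1` to `4, 5`, port `2` to `5, 6`, and port `3` to `6, 7`. -/
def crossGraph : SimpleGraph (Fin 8) :=
  SimpleGraph.fromRel (fun i j =>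
    (i.val, j.val) ∈ [(0, 4), (0, 7), (1, 4), (1, 5), (2, 5), (2, 6),
      (3, 6), (3, 7)])

/-- The even-parity (surface code) language on four letters:
`{0000, 1100, 0011, 1001, 0110, 0101, 1010, 1111}`. -/
def LSCU : Set (Fin 4 → Bool) :=
  {x | Even ((x 0).toNat + (x 1).toNat + (x 2).toNat + (x 3).toNat)}

/-- No assignment of strictly positive weights to the 'cross' graph
makes its maximum-weight independent sets realize the even-parity language on
the four ports. -/
theorem cross_graph_cannot_realize_parity :
    ¬ ∃ Δ : Fin 8 → ℝ, (∀ v, 0 < Δ v) ∧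
      Realizes crossGraph Δ (fun i : Fin 4 => Fin.castLE (by norm_num) i)
        LSCU := by
  rintro ⟨Δ, hpos, hup, hex, hinj⟩
  have hx : (![true, false, true, false] : Fin 4 → Bool) ∈ LSCU := by
    simp only [LSCU, Set.mem_setOf_eq]; decide
  obtain ⟨S, ⟨hSind, hSmax⟩, hport⟩ := hex _ hx
  have hmem := fun i => congrFun hport i
  simp only [portInd] at hmem
  have c0 : (Fin.castLE (by norm_num : (4:ℕ) ≤ 8) (0 : Fin 4) : Fin 8) = 0 := rfl
  have c1 : (Fin.castLE (by norm_num : (4:ℕ) ≤ 8) (1 : Fin 4) : Fin 8) = 1 := rfl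
  have c2 : (Fin.castLE (by norm_num : (4:ℕ) ≤ 8) (2 : Fin 4) : Fin 8) = 2 := rfl
  have c3 : (Fin.castLE (by norm_num : (4:ℕ) ≤ 8) (3 : Fin 4) : Fin 8) = 3 := rfl
  have h0 : (0 : Fin 8) ∈ S := by
    have := hmem 0; simp only [c0] at this
    by_contra h; rw [if_neg h] at this; cases this
  have h2 : (2 : Fin 8) ∈ S := by
    have := hmem 2; simp only [c2] at this
    by_contra h; rw [if_neg h] at this
    exact absurd this (by decide)
  have h1 : (1 : Fin 8) ∉ S := by
    have := hmem 1; simp only [c1] at this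
    intro h; rw [if_pos h] at this
    exact absurd this (by decide)
  have h3 : (3 : Fin 8) ∉ S := by
    have := hmem 3; simp only [c3] at this
    intro h; rw [if_pos h] at this
    exact absurd this (by decide)
  have adj : ∀ a b : Fin 8, (a.val, b.val) ∈ [(0, 4), (0, 7), (1, 4), (1, 5), (2, 5), (2, 6),
      (3, 6), (3, 7)] → a ≠ b → crossGraph.Adj a b := by
    intro a b hab hne
    simp only [crossGraph, SimpleGraph.fromRel_adj]
    exact ⟨hne, Or.inl hab⟩
  have h4 : (4 : Fin 8) ∉ S := fun h => hSind 0 h0 4 h (adj 0 4 (by decide) (by decide))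
  have h5 : (5 : Fin 8) ∉ S := fun h => hSind 2 h2 5 h (adj 2 5 (by decide) (by decide))
  have h6 : (6 : Fin 8) ∉ S := fun h => hSind 2 h2 6 h (adj 2 6 (by decide) (by decide))
  have h7 : (7 : Fin 8) ∉ S := fun h => hSind 0 h0 7 h (adj 0 7 (by decide) (by decide))
  have hSeq : S = ({0, 2} : Finset (Fin 8)) := by
    ext v
    fin_cases v <;> simp_all
  have hT : IsIndepSet' crossGraph ({0, 1, 2, 3} : Finset (Fin 8)) := by
    intro i hi j hj
    simp only [crossGraph, SimpleGraph.fromRel_adj]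
    fin_cases hi <;> fin_cases hj <;> decide
  have hle := hSmax _ hT
  rw [hSeq] at hle
  have e1 : wt Δ ({0, 2} : Finset (Fin 8)) = Δ 0 + Δ 2 := by
    rw [wt, Finset.sum_pair (by decide)]
  have e2 : wt Δ ({0, 1, 2, 3} : Finset (Fin 8)) = Δ 0 + Δ 1 + Δ 2 + Δ 3 := by
    rw [wt]
    rw [show ({0, 1, 2, 3} : Finset (Fin 8)) = insert 0 (insert 1 (insert 2 {3})) from rfl]
    rw [Finset.sum_insert (by decide), Finset.sum_insert (by decide),
      Finset.sum_insert (by decide), Finset.sum_singleton]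
    ring
  rw [e1, e2] at hle
  have p1 := hpos 1
  have p3 := hpos 3
  linarith
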